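/- Let R be a Prüfer domain and let ⋆ be a stable semistar operation on R. Then for every R-submodule I of the quotient field K, I^⋆ ⊆ ⋂_{P ∈ QSpec^⋆(R)} IR_P ∩ ⋂_{P ∈ PsSpec^⋆(R)} (IR_P)^{v_{R_P}}. -/

import Mathlib

open Pointwise

section Defs

variable {R : Type*} (K : Type*) [CommRing R] [IsDomain R] [Field K] [Algebra R K]
  [IsFractionRing R K]

/-- A function `f` on the `R`-submodules of the quotient field `K` is a semistar operation if it
is extensive, idempotent, monotone and commutes with scaling by elements of `K`. -/
def IsSemistarOperation (f : Submodule R K → Submodule R K) : Prop :=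
  (∀ I : Submodule R K, I ≤ f I) ∧
  (∀ I : Submodule R K, f (f I) = f I) ∧
  (∀ I J : Submodule R K, I ≤ J → f I ≤ f J) ∧
  (∀ (x : K) (I : Submodule R K), f (x • I) = x • f I)

/-- A semistar operation is stable if it distributes over finite intersections. -/
def IsStableOperation (f : Submodule R K → Submodule R K) : Prop :=
  ∀ I J : Submodule R K, f (I ⊓ J) = f I ⊓ f J

/-- An ideal of `R`, viewed as an `R`-submodule of the quotient field `K`. -/
def idealToK (I : Ideal R) : Submodule R K :=
  Submodule.map (Algebra.linearMap R K) I

/-- A Prüfer domain is an integral domain in which every nonzero finitely generated ideal is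
invertible (as a fractional ideal, i.e. as a submodule of the quotient field). -/
def IsPruferDomain : Prop :=
  ∀ I : Ideal R, I ≠ ⊥ → I.FG → ∃ J : Submodule R K, idealToK K I * J = 1

/-- The localization `R_P` of `R` at the prime `P`, viewed as an `R`-submodule of the quotient
field `K`. -/
noncomputable def locSub (P : Ideal R) (hP : P.IsPrime) : Submodule R K :=
  haveI := hP
  Subalgebra.toSubmodule
    (Localization.subalgebra K P.primeCompl
      (fun x hx => mem_nonZeroDivisors_of_ne_zero (fun h0 => hx (h0 ▸ P.zero_mem))))

/-- The `v`-operation of the valuation ring `R_P`, applied to the `R_P`-submodule of `K`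
generated by (the image of) `I`: it sends `I` to `(R_P : (R_P : IR_P))`. -/
noncomputable def vOp (P : Ideal R) (hP : P.IsPrime) (I : Submodule R K) : Submodule R K :=
  locSub K P hP / (locSub K P hP / (I * locSub K P hP))

/-- The quasi-spectrum of a (stable) semistar operation: the set of primes `P` such that
`P^⋆ ∩ R = P`. -/
def QSpec (f : Submodule R K → Submodule R K) : Set (Ideal R) :=
  {P | P.IsPrime ∧ f (idealToK K P) ⊓ 1 = idealToK K P}

/-- The pseudo-spectrum of a stable semistar operation: the set of primes `P` such that
`P^⋆ ∩ R = R` and `L^⋆ ∩ R = L` for some `P`-primary ideal `L`. -/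
def PsSpec (f : Submodule R K → Submodule R K) : Set (Ideal R) :=
  {P | P.IsPrime ∧ f (idealToK K P) ⊓ 1 = 1 ∧
    ∃ L : Ideal R, L.IsPrimary ∧ L.radical = P ∧ f (idealToK K L) ⊓ 1 = idealToK K L}

/-- The normalized stable version of a stable semistar operation `f`:
`I ↦ ⋂ {IR_P : P ∈ QSpec} ∩ ⋂ {(IR_P)^{v_{R_P}} : P ∈ PsSpec}`. -/
noncomputable def normStable (f : Submodule R K → Submodule R K) (I : Submodule R K) :
    Submodule R K :=
  (⨅ P : QSpec K f, I * locSub K P.1 P.2.1) ⊓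
    ⨅ P : PsSpec K f, vOp K P.1 P.2.1 I

end Defs

section Helpers

variable {R : Type*} (K : Type*) [CommRing R] [IsDomain R] [Field K] [Algebra R K]
  [IsFractionRing R K]

lemma mem_locSub_iff {P : Ideal R} (hP : P.IsPrime) {y : K} :
    y ∈ locSub K P hP ↔ ∃ a s : R, s ∉ P ∧ y = algebraMap R K a * (algebraMap R K s)⁻¹ := by
  constructor
  · rintro ⟨a, s, hs, rfl⟩
    exact ⟨a, s, hs, by rw [IsFractionRing.mk'_eq_div]; ring⟩
  · rintro ⟨a, s, hs, rfl⟩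
    exact ⟨a, s, hs, by rw [IsFractionRing.mk'_eq_div]; ring⟩

lemma aK_injective : Function.Injective (algebraMap R K) :=
  IsFractionRing.injective R K

variable {K}

lemma aK_ne_zero {r : R} (hr : r ≠ 0) : algebraMap R K r ≠ 0 := by
  intro h
  exact hr (aK_injective K (by rw [h, map_zero]))

lemma algebraMap_mem_locSub {P : Ideal R} (hP : P.IsPrime) (r : R) :
    algebraMap R K r ∈ locSub K P hP :=
  ⟨r, 1, hP.ne_top ∘ (Ideal.eq_top_of_isUnit_mem P · isUnit_one), by
    rw [IsFractionRing.mk'_eq_div, map_one, div_one]⟩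

lemma one_mem_locSub {P : Ideal R} (hP : P.IsPrime) : (1 : K) ∈ locSub K P hP := by
  simpa using algebraMap_mem_locSub (K := K) hP 1

lemma inv_mem_locSub {P : Ideal R} (hP : P.IsPrime) {s : R} (hs : s ∉ P) :
    (algebraMap R K s)⁻¹ ∈ locSub K P hP :=
  (mem_locSub_iff K hP).2 ⟨1, s, hs, by rw [map_one, one_mul]⟩

lemma mul_mem_locSub {P : Ideal R} (hP : P.IsPrime) {u v : K}
    (hu : u ∈ locSub K P hP) (hv : v ∈ locSub K P hP) : u * v ∈ locSub K P hP := by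
  obtain ⟨a, s, hs, rfl⟩ := (mem_locSub_iff K hP).1 hu
  obtain ⟨a', s', hs', rfl⟩ := (mem_locSub_iff K hP).1 hv
  refine (mem_locSub_iff K hP).2 ⟨a * a', s * s',
    fun h => (hP.mul_mem_iff_mem_or_mem.1 h).elim hs hs', ?_⟩
  rw [map_mul, map_mul, mul_inv]
  ring

lemma pow_mem_locSub {P : Ideal R} (hP : P.IsPrime) {u : K}
    (hu : u ∈ locSub K P hP) (n : ℕ) : u ^ n ∈ locSub K P hP := by
  induction n with
  | zero => simpa using one_mem_locSub (K := K) hP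
  | succ n ih => rw [pow_succ]; exact mul_mem_locSub hP ih hu

lemma mem_smul_submodule_iff {a : K} {S : Submodule R K} {k : K} :
    k ∈ a • S ↔ ∃ m ∈ S, k = a * m := by
  constructor
  · rintro ⟨m, hm, rfl⟩
    exact ⟨m, hm, rfl⟩
  · rintro ⟨m, hm, rfl⟩
    exact Submodule.smul_mem_pointwise_smul m a S hm

lemma locSub_mul_locSub {P : Ideal R} (hP : P.IsPrime) :
    locSub K P hP * locSub K P hP ≤ locSub K P hP :=
  Submodule.mul_le.2 fun _ hu _ hv => mul_mem_locSub hP hu hv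

lemma mem_idealToK_iff {J : Ideal R} {k : K} :
    k ∈ idealToK K J ↔ ∃ r ∈ J, algebraMap R K r = k := by
  simp [idealToK, Submodule.mem_map, Algebra.linearMap_apply]

lemma idealToK_top : idealToK K (⊤ : Ideal R) = 1 := by
  rw [Submodule.one_eq_range]
  exact Submodule.map_top _

lemma idealToK_mono {J J' : Ideal R} (h : J ≤ J') : idealToK K J ≤ idealToK K J' :=
  Submodule.map_mono h

/-- The ideal `(I :_R x)`. -/
def colonX (I : Submodule R K) (x : K) : Ideal R :=
  Submodule.comap (LinearMap.toSpanSingleton R K x) I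

lemma mem_colonX {I : Submodule R K} {x : K} {r : R} :
    r ∈ colonX I x ↔ algebraMap R K r * x ∈ I := by
  rw [colonX, Submodule.mem_comap, LinearMap.toSpanSingleton_apply, Algebra.smul_def]

/-- Key claim: if `x ∈ f I` then `(I :_R x)` is `f`-dense. -/
lemma one_le_f_colonX {f : Submodule R K → Submodule R K} (hf : IsSemistarOperation K f)
    (hstable : IsStableOperation K f) {I : Submodule R K} {x : K} (hx : x ∈ f I) :
    (1 : Submodule R K) ≤ f (idealToK K (colonX I x)) := by
  obtain ⟨hext, -, hmono, hsmul⟩ := hf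
  by_cases hx0 : x = 0
  · have : colonX I x = ⊤ := by
      ext r
      simp [mem_colonX, hx0, I.zero_mem]
    rw [this, idealToK_top]
    exact hext 1
  · have h1K : (1 : K) ∈ (1 : Submodule R K) := Submodule.one_le.1 le_rfl
    have hx1 : x ∈ f (x • (1 : Submodule R K)) :=
      hext _ (mem_smul_submodule_iff.2 ⟨1, h1K, (mul_one x).symm⟩)
    have hmem : x ∈ f (I ⊓ x • (1 : Submodule R K)) := by
      rw [hstable]
      exact ⟨hx, hx1⟩
    have heq : I ⊓ x • (1 : Submodule R K) = x • idealToK K (colonX I x) := by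
      ext k
      rw [Submodule.mem_inf, mem_smul_submodule_iff]
      constructor
      · rintro ⟨hkI, m, hm, rfl⟩
        obtain ⟨r, hr⟩ := Submodule.mem_one.1 hm
        exact ⟨m, mem_idealToK_iff.2 ⟨r, mem_colonX.2 (by rw [hr, mul_comm]; exact hkI), hr⟩, rfl⟩
      · rintro ⟨m, hm, rfl⟩
        obtain ⟨r, hr, hrm⟩ := mem_idealToK_iff.1 hm
        rw [mem_colonX] at hr
        have h1 : x * m ∈ I := by rw [← hrm, mul_comm]; exact hr
        exact ⟨h1, m, Submodule.mem_one.2 ⟨r, hrm⟩, rfl⟩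
    rw [heq, hsmul] at hmem
    obtain ⟨c, hc, hcx⟩ := mem_smul_submodule_iff.1 hmem
    have hc1 : c = 1 := mul_left_cancel₀ hx0 (by rw [mul_one]; exact hcx.symm)
    rw [Submodule.one_le, ← hc1]
    exact hc

/-- `R_P` is a valuation ring when `R` is Prüfer. -/
lemma locSub_valuation (hR : IsPruferDomain (R := R) K) {P : Ideal R} (hP : P.IsPrime) (k : K) :
    k ∈ locSub K P hP ∨ k⁻¹ ∈ locSub K P hP := by
  obtain ⟨a, b, hb, rfl⟩ := IsFractionRing.div_surjective (A := R) k
  have hb0 : b ≠ 0 := nonZeroDivisors.ne_zero hb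
  have hbK : algebraMap R K b ≠ 0 := aK_ne_zero hb0
  by_cases ha0 : a = 0
  · left
    rw [ha0, map_zero, zero_div]
    exact (locSub K P hP).zero_mem
  have haK : algebraMap R K a ≠ 0 := aK_ne_zero ha0
  set A : Ideal R := Ideal.span {a, b} with hA
  have hAbot : A ≠ ⊥ := by
    intro h
    have : a ∈ A := Ideal.subset_span (by simp)
    rw [h] at this
    exact ha0 (Submodule.mem_bot R |>.1 this)
  obtain ⟨J, hJ⟩ := hR A hAbot (Submodule.fg_span (Set.toFinite _))
  have haA : algebraMap R K a ∈ idealToK K A :=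
    mem_idealToK_iff.2 ⟨a, Ideal.subset_span (by simp), rfl⟩
  have hbA : algebraMap R K b ∈ idealToK K A :=
    mem_idealToK_iff.2 ⟨b, Ideal.subset_span (by simp), rfl⟩
  have hone : (1 : K) ∈ idealToK K A * J := by
    rw [hJ]; exact Submodule.one_le.1 le_rfl
  have hsplit : idealToK K A * J ≤
      (algebraMap R K a) • J ⊔ (algebraMap R K b) • J := by
    refine Submodule.mul_le.2 ?_
    rintro m hm j hj
    obtain ⟨c, hc, rfl⟩ := mem_idealToK_iff.1 hm
    obtain ⟨p, q, hpq⟩ := Ideal.mem_span_pair.1 hc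
    have : algebraMap R K c * j =
        p • (algebraMap R K a * j) + q • (algebraMap R K b * j) := by
      rw [← hpq, map_add, map_mul, map_mul, Algebra.smul_def, Algebra.smul_def]
      ring
    rw [this]
    refine Submodule.add_mem _ ?_ ?_
    · exact Submodule.mem_sup_left (Submodule.smul_mem _ p
        (Submodule.smul_mem_pointwise_smul j _ J hj))
    · exact Submodule.mem_sup_right (Submodule.smul_mem _ q
        (Submodule.smul_mem_pointwise_smul j _ J hj))
  obtain ⟨y1, hy1, y2, hy2, hsum⟩ := Submodule.mem_sup.1 (hsplit hone)
  obtain ⟨u, hu, hy1e⟩ := mem_smul_submodule_iff.1 hy1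
  obtain ⟨v, hv, hy2e⟩ := mem_smul_submodule_iff.1 hy2
  rw [hy1e, hy2e] at hsum
  have getR : ∀ c : R, c ∈ A → ∀ w : K, w ∈ J → ∃ r : R,
      algebraMap R K r = algebraMap R K c * w := by
    intro c hc w hw
    have : algebraMap R K c * w ∈ (1 : Submodule R K) := by
      rw [← hJ]
      exact Submodule.mul_mem_mul (mem_idealToK_iff.2 ⟨c, hc, rfl⟩) hw
    obtain ⟨r, hr⟩ := Submodule.mem_one.1 this
    exact ⟨r, hr⟩
  have haA' : a ∈ A := Ideal.subset_span (by simp)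
  have hbA' : b ∈ A := Ideal.subset_span (by simp)
  obtain ⟨r1, hr1⟩ := getR a haA' u hu
  obtain ⟨r2, hr2⟩ := getR b hbA' u hu
  obtain ⟨r3, hr3⟩ := getR b hbA' v hv
  obtain ⟨r4, hr4⟩ := getR a haA' v hv
  have hr13 : r1 + r3 = 1 := by
    apply aK_injective K
    rw [map_add, map_one, hr1, hr3, hsum]
  by_cases hr1P : r1 ∉ P
  · right
    have hr10 : r1 ≠ 0 := fun h => hr1P (h ▸ P.zero_mem)
    have hu0 : u ≠ 0 := by
      intro h
      rw [h, mul_zero] at hr1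
      exact hr10 (aK_injective K (by rw [hr1, map_zero]))
    rw [mem_locSub_iff K hP]
    refine ⟨r2, r1, hr1P, ?_⟩
    rw [hr1, hr2]
    field_simp
  · left
    push_neg at hr1P
    have hr3P : r3 ∉ P := by
      intro h
      exact hP.ne_top (Ideal.eq_top_of_isUnit_mem P (hr13 ▸ Ideal.add_mem P hr1P h) isUnit_one)
    have hr30 : r3 ≠ 0 := fun h => hr3P (h ▸ P.zero_mem)
    have hv0 : v ≠ 0 := by
      intro h
      rw [h, mul_zero] at hr3
      exact hr30 (aK_injective K (by rw [hr3, map_zero]))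
    rw [mem_locSub_iff K hP]
    refine ⟨r4, r3, hr3P, ?_⟩
    rw [hr3, hr4]
    field_simp

/-- Contraction of `L R_P` to `R` is `L` for `L` primary with radical `P`. -/
lemma contract_primary {P : Ideal R} (hP : P.IsPrime) {L : Ideal R} (hL1 : L.IsPrimary)
    (hL2 : L.radical = P) {r : R}
    (hr : algebraMap R K r ∈ idealToK K L * locSub K P hP) : r ∈ L := by
  have key : ∀ k : K, k ∈ idealToK K L * locSub K P hP →
      ∃ l s : R, l ∈ L ∧ s ∉ P ∧ k * algebraMap R K s = algebraMap R K l := by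
    intro k hk
    refine Submodule.mul_induction_on hk ?_ ?_
    · rintro m hm n hn
      obtain ⟨l, hl, rfl⟩ := mem_idealToK_iff.1 hm
      obtain ⟨c, s, hs, rfl⟩ := (mem_locSub_iff K hP).1 hn
      have hs0 : algebraMap R K s ≠ 0 := aK_ne_zero (fun h => hs (h ▸ P.zero_mem))
      refine ⟨l * c, s, Ideal.mul_mem_right c L hl, hs, ?_⟩
      rw [map_mul]
      field_simp
    · rintro k1 k2 ⟨l1, s1, hl1, hs1, h1⟩ ⟨l2, s2, hl2, hs2, h2⟩
      refine ⟨l1 * s2 + l2 * s1, s1 * s2, ?_, ?_, ?_⟩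
      · exact Ideal.add_mem L (Ideal.mul_mem_right s2 L hl1) (Ideal.mul_mem_right s1 L hl2)
      · exact fun h => (hP.mul_mem_iff_mem_or_mem.1 h).elim hs1 hs2
      · rw [map_add, map_mul, map_mul, map_mul, ← h1, ← h2]
        ring
  obtain ⟨l, s, hl, hs, h⟩ := key _ hr
  have : r * s ∈ L := by
    have : r * s = l := aK_injective K (by rw [map_mul, h])
    rw [this]; exact hl
  rcases (Ideal.isPrimary_iff.1 hL1).2 this with h' | h'
  · exact h'
  · rw [hL2] at h'
    exact absurd h' hs

lemma mem_I_mul_locSub {P : Ideal R} (hP : P.IsPrime) {I : Submodule R K} {k : K} (hk : k ∈ I) :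
    k ∈ I * locSub K P hP := by
  have := Submodule.mul_mem_mul hk (one_mem_locSub (K := K) hP)
  rwa [mul_one] at this

/-- The QSpec part. -/
lemma qspec_part {f : Submodule R K → Submodule R K} (hf : IsSemistarOperation K f)
    (hstable : IsStableOperation K f) {P : Ideal R} (hP : P.IsPrime)
    (hPc : f (idealToK K P) ⊓ 1 = idealToK K P) {I : Submodule R K} {x : K} (hx : x ∈ f I) :
    x ∈ I * locSub K P hP := by
  by_contra h
  have hJP : colonX I x ≤ P := by
    intro r hr
    by_contra hrP
    have hr0 : r ≠ 0 := fun h0 => hrP (h0 ▸ P.zero_mem)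
    have hx' : x = (algebraMap R K r * x) * (algebraMap R K r)⁻¹ := by
      field_simp [aK_ne_zero hr0]
    exact h (hx' ▸ Submodule.mul_mem_mul (mem_colonX.1 hr) (inv_mem_locSub hP hrP))
  have h1 : (1 : Submodule R K) ≤ f (idealToK K P) :=
    le_trans (one_le_f_colonX hf hstable hx) (hf.2.2.1 _ _ (idealToK_mono hJP))
  have : (1 : K) ∈ idealToK K P := by
    rw [← hPc]
    exact ⟨h1 (Submodule.one_le.1 le_rfl), Submodule.one_le.1 le_rfl⟩
  obtain ⟨p, hp, hp1⟩ := mem_idealToK_iff.1 this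
  have : p = 1 := aK_injective K (by rw [hp1, map_one])
  exact hP.ne_top (Ideal.eq_top_of_isUnit_mem P (this ▸ hp) isUnit_one)

/-- The PsSpec part. -/
lemma psspec_part (hR : IsPruferDomain (R := R) K) {f : Submodule R K → Submodule R K}
    (hf : IsSemistarOperation K f) (hstable : IsStableOperation K f) {P : Ideal R}
    (hP : P.IsPrime) {L : Ideal R} (hL1 : L.IsPrimary) (hL2 : L.radical = P)
    (hLc : f (idealToK K L) ⊓ 1 = idealToK K L) {I : Submodule R K} {x : K} (hx : x ∈ f I) :
    x ∈ vOp K P hP I := by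
  rw [vOp, Submodule.mem_div_iff_forall_mul_mem]
  intro z hz
  rw [Submodule.mem_div_iff_forall_mul_mem] at hz
  by_contra hw
  set w := x * z with hwdef
  have hw0 : w ≠ 0 := fun h => hw (h ▸ (locSub K P hP).zero_mem)
  have ht : w⁻¹ ∈ locSub K P hP := (locSub_valuation hR hP w).resolve_left hw
  set t := w⁻¹ with htdef
  have ht0 : t ≠ 0 := inv_ne_zero hw0
  obtain ⟨a, s, hs, hts⟩ := (mem_locSub_iff K hP).1 ht
  have hsK : algebraMap R K s ≠ 0 := aK_ne_zero (fun h => hs (h ▸ P.zero_mem))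
  have ha0 : a ≠ 0 := by
    intro h
    rw [h, map_zero, zero_mul] at hts
    exact ht0 hts
  have haK : algebraMap R K a ≠ 0 := aK_ne_zero ha0
  have haP : a ∈ P := by
    by_contra haP
    apply hw
    have : w = algebraMap R K s * (algebraMap R K a)⁻¹ := by
      have : w = t⁻¹ := by rw [htdef, inv_inv]
      rw [this, hts]
      field_simp
    rw [this]
    exact (mem_locSub_iff K hP).2 ⟨s, a, haP, rfl⟩
  have haL : a ∈ L.radical := hL2 ▸ haP
  obtain ⟨n0, hn0⟩ := Ideal.mem_radical_iff.1 haL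
  set M := idealToK K L * locSub K P hP with hM
  have hML : M * locSub K P hP ≤ M := by
    rw [hM, mul_assoc]
    exact mul_le_mul_right (locSub_mul_locSub hP) _
  have hQ : ∃ n, t ^ n ∈ M := by
    refine ⟨n0, ?_⟩
    rw [hts, mul_pow, ← map_pow, inv_pow, ← map_pow]
    exact Submodule.mul_mem_mul (mem_idealToK_iff.2 ⟨a ^ n0, hn0, rfl⟩)
      (inv_mem_locSub hP (fun h => hs (hP.mem_of_pow_mem n0 h)))
  classical
  set n := Nat.find hQ with hndef
  have hn : t ^ n ∈ M := Nat.find_spec hQ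
  have hLtop : L ≠ ⊤ := (Ideal.isPrimary_iff.1 hL1).1
  have hn0' : n ≠ 0 := by
    intro h
    rw [h, pow_zero] at hn
    have h1M : algebraMap R K (1 : R) ∈ idealToK K L * locSub K P hP := by
      rw [map_one]; exact hn
    have : (1 : R) ∈ L := contract_primary hP hL1 hL2 h1M
    exact hLtop (Ideal.eq_top_of_isUnit_mem L this isUnit_one)
  have hpred : t ^ (n - 1) ∉ M := Nat.find_min hQ (Nat.sub_lt (Nat.pos_of_ne_zero hn0') one_pos)
  have htn1 : t ^ (n - 1) ∈ locSub K P hP := pow_mem_locSub hP ht _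
  obtain ⟨r', s', hs', h'⟩ := (mem_locSub_iff K hP).1 htn1
  have hs'K : algebraMap R K s' ≠ 0 := aK_ne_zero (fun h => hs' (h ▸ P.zero_mem))
  have hr'L : r' ∉ L := by
    intro hr'
    exact hpred (h' ▸ Submodule.mul_mem_mul (mem_idealToK_iff.2 ⟨r', hr', rfl⟩)
      (inv_mem_locSub hP hs'))
  set B : Ideal R := Submodule.comap (Algebra.linearMap R K) (t • locSub K P hP) with hB
  have hJB : colonX I x ≤ B := by
    intro j hj
    have hjx : algebraMap R K j * x ∈ I := mem_colonX.1 hj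
    have hu : z * (algebraMap R K j * x) ∈ locSub K P hP :=
      hz _ (mem_I_mul_locSub hP hjx)
    rw [hB, Submodule.mem_comap]
    refine mem_smul_submodule_iff.2 ⟨z * (algebraMap R K j * x), hu, ?_⟩
    rw [Algebra.linearMap_apply]
    field_simp [htdef]
    have h1 : t * (x * z) = 1 := by rw [htdef, ← hwdef]; exact inv_mul_cancel₀ hw0
    linear_combination (-(algebraMap R K j)) * h1
  have h1B : (1 : Submodule R K) ≤ f (idealToK K B) :=
    le_trans (one_le_f_colonX hf hstable hx) (hf.2.2.1 _ _ (idealToK_mono hJB))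
  have key : (algebraMap R K r') • idealToK K B ≤ idealToK K L := by
    rintro k hk
    obtain ⟨m, hm, rfl⟩ := mem_smul_submodule_iff.1 hk
    obtain ⟨b, hb, rfl⟩ := mem_idealToK_iff.1 hm
    obtain ⟨u, hu, hbu⟩ := mem_smul_submodule_iff.1 (Submodule.mem_comap.1 hb)
    rw [Algebra.linearMap_apply] at hbu
    have hr'b : r' * b ∈ L := by
      apply contract_primary (K := K) hP hL1 hL2
      have hcomp : algebraMap R K (r' * b) = t ^ n * (algebraMap R K s' * u) := by
        have h2 : algebraMap R K r' = t ^ (n - 1) * algebraMap R K s' := by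
          rw [h']
          field_simp
        have hnn : t ^ (n - 1) * t = t ^ n := by
          rw [← pow_succ, Nat.sub_add_cancel (Nat.pos_of_ne_zero hn0')]
        rw [map_mul, hbu, h2, ← hnn]
        ring
      rw [hcomp]
      exact hML (Submodule.mul_mem_mul hn (mul_mem_locSub hP (algebraMap_mem_locSub hP s') hu))
    rw [← map_mul]
    exact mem_idealToK_iff.2 ⟨r' * b, hr'b, rfl⟩
  have h1 : algebraMap R K r' ∈ (algebraMap R K r') • f (idealToK K B) :=
    mem_smul_submodule_iff.2 ⟨1, h1B (Submodule.one_le.1 le_rfl), (mul_one _).symm⟩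
  rw [← hf.2.2.2] at h1
  have hr'f : algebraMap R K r' ∈ f (idealToK K L) := hf.2.2.1 _ _ key h1
  have hmem : algebraMap R K r' ∈ f (idealToK K L) ⊓ 1 :=
    ⟨hr'f, Submodule.mem_one.2 ⟨r', rfl⟩⟩
  rw [hLc] at hmem
  obtain ⟨l, hl, hl2⟩ := mem_idealToK_iff.1 hmem
  exact hr'L ((aK_injective K hl2) ▸ hl)

end Helpers

/-- Let `R` be a Prüfer domain and `⋆` a stable semistar operation. Then for every `R`-submodule
`I` of `K`, `I^⋆ ⊆ ⋂ {IR_P : P ∈ QSpec^⋆(R)} ∩ ⋂ {(IR_P)^{v_{R_P}} : P ∈ PsSpec^⋆(R)}`. -/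
theorem star_le_normStable {R K : Type*} [CommRing R] [IsDomain R] [Field K] [Algebra R K]
    [IsFractionRing R K]
    (hR : IsPruferDomain (R := R) K)
    (f : Submodule R K → Submodule R K) (hf : IsSemistarOperation K f)
    (hstable : IsStableOperation K f)
    (I : Submodule R K) :
    f I ≤ (⨅ P : QSpec K f, I * locSub K P.1 P.2.1) ⊓
      ⨅ P : PsSpec K f, vOp K P.1 P.2.1 I := by
  refine le_inf (le_iInf fun P => ?_) (le_iInf fun P => ?_)
  · intro x hx
    exact qspec_part hf hstable P.2.1 P.2.2 hx
  · intro x hx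
    obtain ⟨hP, -, L, hL1, hL2, hLc⟩ := P.2
    exact psspec_part hR hf hstable hP hL1 hL2 hLc hx
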